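/- Let F : Ordinal → Ordinal be weakly increasing with F(ζ) < Ω and ζ < F(ζ) for all ζ < Ω. Let α, β be ordinals with α + β < ε(Ω), and assume that every exponent occurring in the base-Ω Cantor normal form of β is strictly smaller than every exponent occurring in the base-Ω Cantor normal form of α (this holds in the paper's application, where α is of the form Ω·α₀ and β < Ω; it guarantees that α + β′ is again in base-Ω normal form for every β′ ≤ β). Then for every ξ < Ω, (F^α)^β(ξ) ≤ F^{α+β}(ξ), where (F^α)^β denotes the hierarchy construction applied to the function F^α. -/

import Mathlib

open Ordinal

/-- The least ordinal `λ` with `Ω ^ λ = λ`. -/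
noncomputable def epsOmega (Ω : Ordinal) : Ordinal := sInf {x : Ordinal | Ω ^ x = x}

/-- The set `K_Ω α` of coefficients of `α`, defined by recursion on `α` via the
base-`Ω` Cantor normal form: `K_Ω α = {β₁,…,β_l} ∪ K_Ω α₁ ∪ ⋯ ∪ K_Ω α_l`. -/
noncomputable def KOmega (Ω : Ordinal) : Ordinal → Set Ordinal :=
  WellFounded.fix Ordinal.lt_wf fun α IH =>
    {β | ∃ p ∈ Ordinal.CNF Ω α, p.2 = β} ∪
    {β | ∃ p ∈ Ordinal.CNF Ω α, ∃ h : p.1 < α, β ∈ IH p.1 h}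

/-- The hierarchy `F^α`: `F^0 ξ = F ξ`, and for `α > 0`, `F^α ξ` is the least `γ` with
`ω^γ = γ`, `K_Ω α ∪ {ξ} < γ`, and `F^β η < γ` for all `η < γ` and `β < α` with `K_Ω β < γ`. -/
noncomputable def Hier (Ω : Ordinal) (F : Ordinal → Ordinal) : Ordinal → Ordinal → Ordinal :=
  WellFounded.fix Ordinal.lt_wf fun α IH =>
    if _ : α = 0 then F
    else fun ξ => sInf {γ : Ordinal | omega0 ^ γ = γ ∧ (∀ x ∈ KOmega Ω α, x < γ) ∧ ξ < γ ∧
      ∀ η < γ, ∀ β, ∀ hβ : β < α, (∀ x ∈ KOmega Ω β, x < γ) → IH β hβ η < γ}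

/-! By induction on `β`. Because every exponent of `β` lies below every exponent of `α`, the
base-`Ω` normal form of `α + β'` is that of `α` followed by that of `β'` for each `β' ≤ β`, so
`K_Ω (α + β') ⊆ K_Ω α ∪ K_Ω β'` and `K_Ω β ⊆ K_Ω (α + β)`. Hence `γ = F^(α+β)(ξ)` satisfies the
closure conditions defining `(F^α)^β(ξ)`: for `β' < β` with `K_Ω β' < γ` and `η < γ`, the
induction hypothesis gives `(F^α)^β'(η) ≤ F^(α+β')(η)`, and the latter is `< γ` because
`α + β' < α + β` and `K_Ω (α + β') < γ`. Minimality of `(F^α)^β(ξ)` then gives the claim. -/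

universe u

section CNF

variable {b : Ordinal}

theorem add_lt_opow_of_lt_opow_CNF_fst (hb : 1 < b) {α β e : Ordinal} (hα : α < b ^ e)
    (hβ : β < b ^ e) (h : ∀ p ∈ CNF b α, β < b ^ p.1) : α + β < b ^ e := by
  induction α using CNF.rec b generalizing e with
  | H0 => rwa [zero_add]
  | H α hα0 IH =>
    set l := log b α
    have hβl : β < b ^ l := h _ (by rw [CNF.ne_zero hα0]; exact List.mem_cons_self)
    have hr : α % b ^ l + β < b ^ l :=
      IH (mod_lt α (opow_ne_zero l (zero_lt_one.trans hb).ne')) hβl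
        fun p hp => h p (by rw [CNF.ne_zero hα0]; exact List.mem_cons_of_mem _ hp)
    calc α + β = b ^ l * (α / b ^ l) + (α % b ^ l + β) := by rw [← add_assoc, div_add_mod]
      _ < b ^ l * (α / b ^ l) + b ^ l := add_lt_add_right hr _
      _ = b ^ l * Order.succ (α / b ^ l) := (mul_succ _ _).symm
      _ ≤ b ^ l * b := mul_le_mul_right (Order.succ_le_of_lt (div_opow_log_lt α hb)) _
      _ = b ^ Order.succ l := (opow_succ b l).symm
      _ ≤ b ^ e := opow_le_opow_right (zero_lt_one.trans hb)
          (Order.succ_le_of_lt ((lt_opow_iff_log_lt hb hα0).1 hα))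

theorem CNF_add (hb : 1 < b) {α β : Ordinal} (h : ∀ p ∈ CNF b α, β < b ^ p.1) :
    CNF b (α + β) = CNF b α ++ CNF b β := by
  induction α using CNF.rec b with
  | H0 => rw [zero_add, CNF.zero_right, List.nil_append]
  | H α hα0 IH =>
    set l := log b α
    have hβl : β < b ^ l := h _ (by rw [CNF.ne_zero hα0]; exact List.mem_cons_self)
    have htail : ∀ p ∈ CNF b (α % b ^ l), β < b ^ p.1 :=
      fun p hp => h p (by rw [CNF.ne_zero hα0]; exact List.mem_cons_of_mem _ hp)
    have hr : α % b ^ l + β < b ^ l :=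
      add_lt_opow_of_lt_opow_CNF_fst hb (mod_lt α (opow_ne_zero l (zero_lt_one.trans hb).ne'))
        hβl htail
    rw [← div_add_mod α (b ^ l), add_assoc,
      CNF.opow_mul_add hb (div_opow_log_pos b hα0).ne' (div_opow_log_lt α hb) hr, IH htail,
      div_add_mod, CNF.ne_zero hα0, List.cons_append]

theorem lt_opow_CNF_fst_of_CNF_fst_lt (hb : 1 < b) {α β : Ordinal}
    (h : ∀ p ∈ CNF b β, ∀ q ∈ CNF b α, p.1 < q.1) : ∀ q ∈ CNF b α, β < b ^ q.1 := by
  intro q hq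
  rcases eq_or_ne β 0 with rfl | hβ0
  · exact opow_pos _ (zero_lt_one.trans hb)
  calc β < b ^ Order.succ (log b β) := lt_opow_succ_log_self hb β
    _ ≤ b ^ q.1 := opow_le_opow_right (zero_lt_one.trans hb) <| Order.succ_le_of_lt <|
        h _ (by rw [CNF.ne_zero hβ0]; exact List.mem_cons_self) q hq

end CNF

section KOmega

variable {Ω : Ordinal}

theorem KOmega_eq (Ω α : Ordinal) :
    KOmega Ω α = {β | ∃ p ∈ CNF Ω α, p.2 = β} ∪
      {β | ∃ p ∈ CNF Ω α, ∃ _ : p.1 < α, β ∈ KOmega Ω p.1} := by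
  rw [KOmega, WellFounded.fix_eq]

theorem lt_of_mem_KOmega (hΩ : 1 < Ω) {α x : Ordinal} (hx : x ∈ KOmega Ω α) : x < Ω := by
  induction α using WellFoundedLT.induction with
  | _ α IH =>
    rw [KOmega_eq] at hx
    rcases hx with ⟨p, hp, rfl⟩ | ⟨p, _, hpα, hx⟩
    · exact CNF.snd_lt hΩ hp
    · exact IH p.1 hpα hx

theorem log_lt_self_of_lt_epsOmega (hΩ : 1 < Ω) {x : Ordinal} (hx0 : x ≠ 0)
    (hx : x < epsOmega Ω) : log Ω x < x := by
  refine (log_le_self Ω x).lt_of_ne fun h => hx.not_ge (csInf_le' ?_)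
  exact le_antisymm (by simpa only [h] using opow_log_le_self Ω hx0) (right_le_opow x hΩ)

theorem CNF_fst_lt_of_lt_epsOmega (hΩ : 1 < Ω) {x : Ordinal} (hx : x < epsOmega Ω)
    {p : Ordinal × Ordinal} (hp : p ∈ CNF Ω x) : p.1 < x := by
  have hx0 : x ≠ 0 := by rintro rfl; simp [CNF.zero_right] at hp
  exact (CNF.fst_le_log hp).trans_lt (log_lt_self_of_lt_epsOmega hΩ hx0 hx)

theorem KOmega_subset_KOmega_add_left {α β : Ordinal}
    (hcat : CNF Ω (α + β) = CNF Ω α ++ CNF Ω β) : KOmega Ω α ⊆ KOmega Ω (α + β) := by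
  intro x hx
  rw [KOmega_eq] at hx
  rw [KOmega_eq, hcat]
  rcases hx with ⟨p, hp, hpx⟩ | ⟨p, hp, hpα, hpx⟩
  · exact Or.inl ⟨p, List.mem_append_left _ hp, hpx⟩
  · exact Or.inr ⟨p, List.mem_append_left _ hp, hpα.trans_le le_self_add, hpx⟩

theorem KOmega_subset_KOmega_add_right {α β : Ordinal}
    (hcat : CNF Ω (α + β) = CNF Ω α ++ CNF Ω β) : KOmega Ω β ⊆ KOmega Ω (α + β) := by
  intro x hx
  rw [KOmega_eq] at hx
  rw [KOmega_eq, hcat]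
  rcases hx with ⟨p, hp, hpx⟩ | ⟨p, hp, hpβ, hpx⟩
  · exact Or.inl ⟨p, List.mem_append_right _ hp, hpx⟩
  · exact Or.inr ⟨p, List.mem_append_right _ hp, hpβ.trans_le le_add_self, hpx⟩

theorem KOmega_add_subset (hΩ : 1 < Ω) {α β : Ordinal} (hε : α + β < epsOmega Ω)
    (hcat : CNF Ω (α + β) = CNF Ω α ++ CNF Ω β) :
    KOmega Ω (α + β) ⊆ KOmega Ω α ∪ KOmega Ω β := by
  intro x hx
  rw [KOmega_eq, hcat] at hx
  rw [Set.mem_union, KOmega_eq, KOmega_eq]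
  rcases hx with ⟨p, hp, hpx⟩ | ⟨p, hp, _, hpx⟩ <;> rcases List.mem_append.1 hp with hp | hp
  · exact Or.inl (Or.inl ⟨p, hp, hpx⟩)
  · exact Or.inr (Or.inl ⟨p, hp, hpx⟩)
  · exact Or.inl (Or.inr ⟨p, hp,
      CNF_fst_lt_of_lt_epsOmega hΩ (le_self_add.trans_lt hε) hp, hpx⟩)
  · exact Or.inr (Or.inr ⟨p, hp,
      CNF_fst_lt_of_lt_epsOmega hΩ (le_add_self.trans_lt hε) hp, hpx⟩)

end KOmega

section Hier

def IsHierBound (Ω : Ordinal) (F : Ordinal → Ordinal) (α ξ γ : Ordinal) : Prop :=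
  ω ^ γ = γ ∧ (∀ x ∈ KOmega Ω α, x < γ) ∧ ξ < γ ∧
    ∀ η < γ, ∀ β < α, (∀ x ∈ KOmega Ω β, x < γ) → Hier Ω F β η < γ

variable {Ω : Ordinal} (F : Ordinal → Ordinal)

theorem Hier_zero (Ω : Ordinal) : Hier Ω F 0 = F := by
  rw [Hier, WellFounded.fix_eq]
  exact dif_pos rfl

theorem Hier_of_ne_zero (Ω : Ordinal) {α : Ordinal} (hα : α ≠ 0) (ξ : Ordinal) :
    Hier Ω F α ξ = sInf {γ | IsHierBound Ω F α ξ γ} := by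
  rw [Hier, WellFounded.fix_eq, dif_neg hα]
  rfl

theorem exists_opow_omega0_eq_and_closed (g : Ordinal.{u} → Ordinal.{u}) (a : Ordinal.{u}) :
    ∃ γ, a < γ ∧ ω ^ γ = γ ∧ ∀ η < γ, g η < γ := by
  set h : Ordinal.{u} → Ordinal.{u} := fun x => max (ω ^ x) (Order.succ (⨆ η : Set.Iio x, g η))
  set a' := Order.succ a
  have hstep : ∀ n, h (h^[n] a') ≤ nfp h a' := fun n => by
    rw [← Function.iterate_succ_apply' h]; exact iterate_le_nfp h a' (n + 1)
  refine ⟨nfp h a', (Order.lt_succ a).trans_le (le_nfp h a'), le_antisymm ?_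
    (right_le_opow _ one_lt_omega0), fun η hη => ?_⟩
  · rw [← iSup_iterate_eq_nfp, (isNormal_opow one_lt_omega0).map_iSup bddAbove_of_small,
      iSup_iterate_eq_nfp]
    exact Ordinal.iSup_le fun n => (le_max_left _ _).trans (hstep n)
  · obtain ⟨n, hn⟩ := lt_nfp_iff.1 hη
    calc g η ≤ ⨆ η' : Set.Iio (h^[n] a'), g η' := Ordinal.le_iSup (fun η' : Set.Iio (h^[n] a') => g η') ⟨η, hn⟩
      _ < h (h^[n] a') := (Order.lt_succ _).trans_le (le_max_right _ _)
      _ ≤ nfp h a' := hstep n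

-- Needed because `sInf ∅ = 0`: it makes the infimum in `Hier_of_ne_zero` attained.
theorem exists_isHierBound (hΩ : 1 < Ω) (α ξ : Ordinal) : ∃ γ, IsHierBound Ω F α ξ γ := by
  obtain ⟨γ, hlt, hfix, hclosed⟩ :=
    exists_opow_omega0_eq_and_closed (fun η => ⨆ β : Set.Iio α, Hier Ω F β η) (max Ω ξ)
  exact ⟨γ, hfix, fun x hx => (lt_of_mem_KOmega hΩ hx).trans ((le_max_left _ _).trans_lt hlt),
    (le_max_right _ _).trans_lt hlt, fun η hη β hβ _ =>
      (Ordinal.le_iSup (fun β : Set.Iio α => Hier Ω F β η) ⟨β, hβ⟩).trans_lt (hclosed η hη)⟩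

theorem isHierBound_Hier (hΩ : 1 < Ω) {α : Ordinal} (hα : α ≠ 0) (ξ : Ordinal) :
    IsHierBound Ω F α ξ (Hier Ω F α ξ) := by
  rw [Hier_of_ne_zero F Ω hα]
  exact csInf_mem (exists_isHierBound F hΩ α ξ)

theorem Hier_le_of_isHierBound {α ξ γ : Ordinal} (hα : α ≠ 0) (h : IsHierBound Ω F α ξ γ) :
    Hier Ω F α ξ ≤ γ := by
  rw [Hier_of_ne_zero F Ω hα]
  exact csInf_le' h

theorem Hier_Hier_le_Hier_add (hΩ : 1 < Ω) {α β : Ordinal} (hε : α + β < epsOmega Ω)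
    (hβ : ∀ q ∈ CNF Ω α, β < Ω ^ q.1) (ξ : Ordinal) :
    Hier Ω (Hier Ω F α) β ξ ≤ Hier Ω F (α + β) ξ := by
  induction β using WellFoundedLT.induction generalizing ξ with
  | _ β IH =>
    rcases eq_or_ne β 0 with rfl | hβ0
    · rw [add_zero, Hier_zero]
    have hcat := CNF_add hΩ hβ
    obtain ⟨hfix, hK, hξ, hclosed⟩ :=
      isHierBound_Hier F hΩ (fun h => hβ0 (right_eq_zero_of_add_eq_zero h)) ξ
    refine Hier_le_of_isHierBound _ hβ0
      ⟨hfix, fun x hx => hK x (KOmega_subset_KOmega_add_right hcat hx), hξ, ?_⟩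
    intro η hη β' hβ' hK'
    have hβ'α : ∀ q ∈ CNF Ω α, β' < Ω ^ q.1 := fun q hq => hβ'.trans (hβ q hq)
    have hlt : α + β' < α + β := add_lt_add_right hβ' α
    refine (IH β' hβ' (hlt.trans hε) hβ'α η).trans_lt (hclosed η hη _ hlt fun x hx => ?_)
    rcases KOmega_add_subset hΩ (hlt.trans hε) (CNF_add hΩ hβ'α) hx with hx | hx
    · exact hK x (KOmega_subset_KOmega_add_left hcat hx)
    · exact hK' x hx

end Hier

theorem stmt5_general (Ω : Ordinal) (hΩ : 1 < Ω) (F : Ordinal → Ordinal)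
    (α β : Ordinal) (hαβ : α + β < epsOmega Ω)
    (hexp : ∀ p ∈ Ordinal.CNF Ω β, ∀ q ∈ Ordinal.CNF Ω α, p.1 < q.1) :
    ∀ ξ < Ω, Hier Ω (Hier Ω F α) β ξ ≤ Hier Ω F (α + β) ξ :=
  fun ξ _ => Hier_Hier_le_Hier_add F hΩ hαβ (lt_opow_CNF_fst_of_CNF_fst_lt hΩ hexp) ξ

/-- For F weakly increasing with F(ζ) < Ω and ζ < F(ζ) for all ζ < Ω, and ordinals
α, β with α + β < ε(Ω) such that every exponent in the base-Ω Cantor normal form of β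
is strictly smaller than every exponent in that of α: for every ξ < Ω,
(F^α)^β(ξ) ≤ F^(α+β)(ξ). -/
theorem stmt5 (Ω : Ordinal) (hΩ : 1 < Ω) (F : Ordinal → Ordinal)
    (hmono : Monotone F) (hF : ∀ ζ < Ω, F ζ < Ω) (hincr : ∀ ζ < Ω, ζ < F ζ)
    (α β : Ordinal) (hαβ : α + β < epsOmega Ω)
    (hexp : ∀ p ∈ Ordinal.CNF Ω β, ∀ q ∈ Ordinal.CNF Ω α, p.1 < q.1) :
    ∀ ξ < Ω, Hier Ω (Hier Ω F α) β ξ ≤ Hier Ω F (α + β) ξ :=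
  stmt5_general Ω hΩ F α β hαβ hexp
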